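/- Construction of a solution with unbounded local energy from a sequence of amplified solutions: suppose (φ_n) is a sequence of solutions of a linear equation, with times τ_n → ∞, such that (a) E[φ_n](0) ≤ 2^{-3·2^n}, (b) the local energy satisfies E_loc[φ_n](τ_n) ≥ 2^{2^n}, (c) for m > n, E_loc[φ_m](τ_n) ≤ 2^{-2·2^m}, and (d) for m < n, E_loc[φ_m](τ_n) ≤ 2^{-n} (for all sufficiently large n). Then φ_∞ = Σ_n φ_n converges to a solution of finite initial energy (E[φ_∞](0) ≤ Σ 2^{-3·2^n} < ∞, after noting E^{1/2} is a seminorm), and limsup_{τ→∞} E_loc[φ_∞](τ) = ∞, with E_loc[φ_∞](τ_n) → ∞ along the sequence τ_n. -/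

import Mathlib

/-!
The bound on the initial energy is the triangle inequality for `√E`: by (a),
`√E[φ_n](0) ≤ 2^{-(n+1)}`, and these sum to `1`. At time `τ_n` the reverse triangle inequality
gives `√E_loc[φ_∞](τ_n) ≥ 2^n - (n + 2)`: by (b) the `n`-th term contributes at least
`2^{2^{n-1}} ≥ 2^n`, by (d) each of the `n` earlier terms at most `1`, and by (c) the later
terms at most a geometric tail. Unboundedness on `[T, ∞)` follows since `τ_n → ∞`.
-/

open Filter

theorem Nat.two_mul_add_two_le_two_pow {n : ℕ} (hn : 3 ≤ n) : 2 * n + 2 ≤ 2 ^ n := by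
  induction n, hn using Nat.le_induction with
  | base => norm_num
  | succ k _ ih => rw [pow_succ]; omega

theorem Real.sqrt_le_half_pow {x : ℝ} {k j : ℕ} (hkj : 2 * k ≤ j) (hx : x ≤ ((2:ℝ) ^ j)⁻¹) :
    √x ≤ (1 / 2) ^ k := by
  rw [Real.sqrt_le_left (by positivity), ← pow_mul, one_div, inv_pow, mul_comm]
  exact hx.trans (inv_anti₀ (by positivity) (pow_le_pow_right₀ (by norm_num) hkj))

theorem le_one_of_sqrt_le_tsum_sqrt {x : ℝ} {e : ℕ → ℝ}
    (he : ∀ n, e n ≤ ((2:ℝ) ^ (3 * 2 ^ n))⁻¹) (hx : √x ≤ ∑' n, √(e n)) : x ≤ 1 := by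
  have hbound (n : ℕ) : √(e n) ≤ (1 / 2) ^ (n + 1) :=
    Real.sqrt_le_half_pow (by have := n.lt_two_pow_self; omega) (he n)
  have hgeom : Summable fun n : ℕ ↦ ((1:ℝ) / 2) ^ (n + 1) := by
    simpa only [pow_succ] using summable_geometric_two.mul_right (1 / 2)
  have htsum : ∑' n : ℕ, ((1:ℝ) / 2) ^ (n + 1) = 1 := by
    simp only [pow_succ]
    rw [tsum_mul_right, tsum_geometric_two]
    norm_num
  rw [← Real.sqrt_le_one, ← htsum]
  exact hx.trans <| (hgeom.of_nonneg_of_le (fun _ ↦ Real.sqrt_nonneg _) hbound).tsum_le_tsum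
    hbound hgeom

theorem tsum_ne_le_natCast_add_two {g : ℕ → ℝ} {n : ℕ} (hg : ∀ m, 0 ≤ g m)
    (hlt : ∀ m < n, g m ≤ 1) (hgt : ∀ m, n < m → g m ≤ (1 / 2) ^ m) :
    ∑' m : {m : ℕ // m ≠ n}, g m ≤ n + 2 := by
  set H : ℕ → ℝ := fun m ↦ (1 / 2) ^ m + if m < n then 1 else 0
  have hfin : ∀ m ∉ Finset.range n, (if m < n then (1:ℝ) else 0) = 0 := by
    intro m hm; simp_all
  have hH : HasSum H (2 + n) := by
    convert hasSum_geometric_two.add (hasSum_sum_of_ne_finset_zero hfin) using 2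
    rw [Finset.sum_ite_of_true (fun m hm ↦ Finset.mem_range.mp hm)]
    simp
  have hgH (m : ℕ) (hm : m ≠ n) : g m ≤ H m := by
    rcases hm.lt_or_gt with hm | hm
    · simp only [H, if_pos hm]
      linarith [hlt m hm, pow_nonneg (by norm_num : (0:ℝ) ≤ 1 / 2) m]
    · simp only [H, if_neg hm.not_gt, add_zero]
      exact hgt m hm
  calc ∑' m : {m : ℕ // m ≠ n}, g m ≤ ∑' m, H m :=
        Summable.tsum_le_tsum_of_inj Subtype.val Subtype.val_injective
          (fun m _ ↦ by positivity) (fun m ↦ hgH m m.2)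
          ((hH.summable.comp_injective Subtype.val_injective).of_nonneg_of_le (fun m ↦ hg m)
            (fun m ↦ hgH m m.2)) hH.summable
    _ = n + 2 := by rw [hH.tsum_eq, add_comm]

theorem natCast_le_of_sqrt_le_sqrt_add_tsum {f : ℕ → ℝ} {x : ℝ} {n : ℕ} (hn : 3 ≤ n)
    (hfn : (2:ℝ) ^ (2 ^ n) ≤ f n) (hlt : ∀ m < n, f m ≤ ((2:ℝ) ^ n)⁻¹)
    (hgt : ∀ m, n < m → f m ≤ ((2:ℝ) ^ (2 * 2 ^ m))⁻¹)
    (hrev : √(f n) ≤ √x + ∑' m : {m : ℕ // m ≠ n}, √(f m)) :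
    (n : ℝ) ≤ x := by
  have hpow : ((2 * n + 2 : ℕ) : ℝ) ≤ (2:ℝ) ^ n := by
    exact_mod_cast Nat.two_mul_add_two_le_two_pow hn
  have hrest : ∑' m : {m : ℕ // m ≠ n}, √(f m) ≤ n + 2 :=
    tsum_ne_le_natCast_add_two (fun _ ↦ Real.sqrt_nonneg _)
      (fun m hm ↦ by simpa using Real.sqrt_le_half_pow (k := 0) (by omega) (hlt m hm))
      (fun m hm ↦ Real.sqrt_le_half_pow (by have := m.lt_two_pow_self; omega) (hgt m hm))
  have hmain : (2:ℝ) ^ n ≤ √(f n) := by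
    rw [Real.le_sqrt' (by positivity), ← pow_mul]
    exact le_trans (pow_le_pow_right₀ (by norm_num)
      (by have := Nat.two_mul_add_two_le_two_pow hn; omega)) hfn
  have hsqrt : (n : ℝ) ≤ √x := by push_cast at hpow; linarith
  rw [Real.le_sqrt' (by positivity)] at hsqrt
  exact (le_self_pow₀ (by exact_mod_cast (by omega : 1 ≤ n)) two_ne_zero).trans hsqrt

theorem stmt_16_general {Sol : Type*}
    (E Eloc : Sol → ℝ → ℝ)
    (φ : ℕ → Sol) (φinf : Sol) (τ : ℕ → ℝ)
    (hτ : Tendsto τ atTop atTop)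
    -- (a) small initial energies
    (ha : ∀ n, E (φ n) 0 ≤ ((2:ℝ) ^ (3 * 2 ^ n))⁻¹)
    -- (b) amplified local energies
    (hb : ∀ n, (2:ℝ) ^ (2 ^ n) ≤ Eloc (φ n) (τ n))
    -- (c) later solutions are still small at time τ_n
    (hc : ∀ m n, n < m → Eloc (φ m) (τ n) ≤ ((2:ℝ) ^ (2 * 2 ^ m))⁻¹)
    -- (d) earlier solutions have dispersed by time τ_n (n large)
    (hd : ∃ N : ℕ, ∀ m n, N ≤ n → m < n → Eloc (φ m) (τ n) ≤ ((2:ℝ) ^ n)⁻¹)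
    -- √E is a seminorm, compatible with the infinite sum φ_∞ = Σ_n φ_n
    (hsumE : Real.sqrt (E φinf 0) ≤ ∑' n, Real.sqrt (E (φ n) 0))
    -- reverse triangle inequality for √Eloc at each time τ_n
    (hrev : ∀ n, Real.sqrt (Eloc (φ n) (τ n)) ≤
      Real.sqrt (Eloc φinf (τ n))
        + ∑' m : {m : ℕ // m ≠ n}, Real.sqrt (Eloc (φ (m : ℕ)) (τ n))) :
    E φinf 0 ≤ 1 ∧
      Tendsto (fun n => Eloc φinf (τ n)) atTop atTop ∧
      (∀ M : ℝ, ∃ᶠ t in atTop, M ≤ Eloc φinf t) := by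
  obtain ⟨N, hN⟩ := hd
  have hblowup : Tendsto (fun n => Eloc φinf (τ n)) atTop atTop := by
    refine tendsto_atTop_mono' atTop ?_ tendsto_natCast_atTop_atTop
    filter_upwards [eventually_ge_atTop (max N 3)] with n hn
    exact natCast_le_of_sqrt_le_sqrt_add_tsum (le_of_max_le_right hn) (hb n)
      (fun m hm ↦ hN m n (le_of_max_le_left hn) hm) (fun m hm ↦ hc m n hm) (hrev n)
  exact ⟨le_one_of_sqrt_le_tsum_sqrt ha hsumE, hblowup,
    fun M ↦ hτ.frequently (hblowup.eventually_ge_atTop M).frequently⟩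

/-- construction of a solution with unbounded local energy from a sequence
of amplified solutions.  `E` and `Eloc` are nonnegative quadratic energy functionals with
`Eloc ≤ E` whose square roots behave like seminorms (compatibly with the infinite sum
`φ_∞ = Σ_n φ_n`, expressed by the triangle inequality `hsumE` and the reverse triangle
inequality `hrev`).  Given solutions `φ_n` and times `τ_n → ∞` with
(a) `E[φ_n](0) ≤ 2^{-3·2ⁿ}`, (b) `Eloc[φ_n](τ_n) ≥ 2^{2ⁿ}`,
(c) `Eloc[φ_m](τ_n) ≤ 2^{-2·2ᵐ}` for `m > n`, and
(d) `Eloc[φ_m](τ_n) ≤ 2^{-n}` for `m < n` and all sufficiently large `n`,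
the sum `φ_∞` has finite initial energy `E[φ_∞](0) ≤ 1`, while its local energy blows up
along `τ_n`; in particular `limsup_{τ→∞} Eloc[φ_∞](τ) = ∞`. -/
theorem stmt_16 {Sol : Type*}
    (E Eloc : Sol → ℝ → ℝ)
    (φ : ℕ → Sol) (φinf : Sol) (τ : ℕ → ℝ)
    (hnonnegE : ∀ ψ t, 0 ≤ E ψ t)
    (hnonnegEloc : ∀ ψ t, 0 ≤ Eloc ψ t)
    (hle : ∀ ψ t, Eloc ψ t ≤ E ψ t)
    (hτ : Tendsto τ atTop atTop)
    -- (a) small initial energies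
    (ha : ∀ n, E (φ n) 0 ≤ ((2:ℝ) ^ (3 * 2 ^ n))⁻¹)
    -- (b) amplified local energies
    (hb : ∀ n, (2:ℝ) ^ (2 ^ n) ≤ Eloc (φ n) (τ n))
    -- (c) later solutions are still small at time τ_n
    (hc : ∀ m n, n < m → Eloc (φ m) (τ n) ≤ ((2:ℝ) ^ (2 * 2 ^ m))⁻¹)
    -- (d) earlier solutions have dispersed by time τ_n (n large)
    (hd : ∃ N : ℕ, ∀ m n, N ≤ n → m < n → Eloc (φ m) (τ n) ≤ ((2:ℝ) ^ n)⁻¹)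
    -- √E is a seminorm, compatible with the infinite sum φ_∞ = Σ_n φ_n
    (hsumE : Real.sqrt (E φinf 0) ≤ ∑' n, Real.sqrt (E (φ n) 0))
    -- reverse triangle inequality for √Eloc at each time τ_n
    (hrev : ∀ n, Real.sqrt (Eloc (φ n) (τ n)) ≤
      Real.sqrt (Eloc φinf (τ n))
        + ∑' m : {m : ℕ // m ≠ n}, Real.sqrt (Eloc (φ (m : ℕ)) (τ n))) :
    E φinf 0 ≤ 1 ∧
      Tendsto (fun n => Eloc φinf (τ n)) atTop atTop ∧
      (∀ M : ℝ, ∃ᶠ t in atTop, M ≤ Eloc φinf t) :=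
  stmt_16_general E Eloc φ φinf τ hτ ha hb hc hd hsumE hrev
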